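/- In an Osborn loop Q, for every x ∈ Q one has (x^λ·(x·x))^λ = x^λ·(x·x^λ). -/
import Mathlib


/-- A loop: a type with a binary operation `*` and identity `1` such that all
left and right translations are bijective (witnessed by the two division
operations `ldiv` (`x \ z`) and `rdiv` (`z / y`)). -/
class LoopStr (Q : Type*) extends Mul Q, One Q where
  one_mul : ∀ x : Q, 1 * x = x
  mul_one : ∀ x : Q, x * 1 = x
  /-- `ldiv a b = a \ b`, the unique `y` with `a * y = b`. -/
  ldiv : Q → Q → Q
  /-- `rdiv b a = b / a`, the unique `x` with `x * a = b`. -/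
  rdiv : Q → Q → Q
  mul_ldiv : ∀ a b : Q, a * ldiv a b = b
  ldiv_mul : ∀ a b : Q, ldiv a (a * b) = b
  rdiv_mul : ∀ a b : Q, rdiv a b * b = a
  mul_rdiv : ∀ a b : Q, rdiv (a * b) b = a

namespace LoopStr

variable {Q : Type*} [LoopStr Q]

/-- `x^λ`, the unique left inverse of `x` : `x^λ * x = 1`. -/
def lInv (x : Q) : Q := rdiv 1 x

/-- `x^ρ`, the unique right inverse of `x` : `x * x^ρ = 1`. -/
def rInv (x : Q) : Q := ldiv x 1

/-- A loop is Osborn if `x * (((x^λ * y) * z) * x) = y * (z * x)` for all `x,y,z`. -/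
def IsOsborn (Q : Type*) [LoopStr Q] : Prop :=
  ∀ x y z : Q, x * (((lInv x * y) * z) * x) = y * (z * x)

end LoopStr

open LoopStr

section Aux

variable {Q : Type*} [LoopStr Q]

lemma lInv_mul' (x : Q) : lInv x * x = 1 := LoopStr.rdiv_mul 1 x

lemma lInv_eq' {x w : Q} (hw : w * x = 1) : lInv x = w := by
  have := LoopStr.mul_rdiv w x
  rw [hw] at this
  exact this

lemma rInv_eq' {x w : Q} (hw : x * w = 1) : rInv x = w := by
  have := LoopStr.ldiv_mul x w
  rw [hw] at this
  exact this

lemma lInv_lInv' (h : IsOsborn Q) (x : Q) :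
    lInv (lInv x) = lInv x * (x * x) := by
  -- Osborn with y := x*x, z := lInv x
  have h1 := h x (x * x) (lInv x)
  rw [lInv_mul', LoopStr.mul_one] at h1
  -- h1 : x * (((lInv x * (x*x)) * lInv x) * x) = x * x
  have h2 : ((lInv x * (x * x)) * lInv x) * x = x := by
    have := LoopStr.ldiv_mul x (((lInv x * (x * x)) * lInv x) * x)
    rw [h1] at this
    rw [← this, LoopStr.ldiv_mul]
  have h3 : (lInv x * (x * x)) * lInv x = 1 := by
    have h4 := LoopStr.mul_rdiv ((lInv x * (x * x)) * lInv x) x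
    rw [h2] at h4
    have h5 := LoopStr.mul_rdiv (1 : Q) x
    rw [LoopStr.one_mul] at h5
    rw [h5] at h4
    exact h4.symm
  exact lInv_eq' h3

lemma rInv_eq_mul' (h : IsOsborn Q) (x : Q) :
    rInv x = (lInv x * lInv x) * x := by
  have h1 := h x 1 (lInv x)
  rw [LoopStr.mul_one, lInv_mul', LoopStr.one_mul] at h1
  exact rInv_eq' h1

lemma lInv_lInv_eq' (h : IsOsborn Q) (x : Q) :
    lInv (lInv x) = x * (rInv x * x) := by
  have h1 := h x (lInv x) x
  -- x * (((lInv x * lInv x) * x) * x) = lInv x * (x * x)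
  rw [← rInv_eq_mul' h, ← lInv_lInv' h] at h1
  exact h1.symm

lemma rInv_lInv' (x : Q) : rInv (lInv x) = x := rInv_eq' (lInv_mul' x)

end Aux

/-- in an Osborn loop, `(x^λ·(x·x))^λ = x^λ·(x·x^λ)`. -/
theorem stmt10 (Q : Type*) [LoopStr Q] (h : IsOsborn Q) :
    ∀ x : Q, lInv (lInv x * (x * x)) = lInv x * (x * lInv x) := by
  intro x
  rw [← lInv_lInv' h x, lInv_lInv_eq' h (lInv x), rInv_lInv']
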